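/- Let G be a 3-colorable good graph with a fixed vertex v0 and associated partition V(G) = T_G ∪ M_G ∪ B_G. Let G1 = G ∪ {e} for some non-edge e of G, let x and y be vertices with x, y ∈ B_{G1}, and let G2 = G1 ∪ {v0 y}, where G1 and G2 are 3-colorable. If B_{G2} is an independent set in G2 (property (P1) holds for G2), then x ∉ T_{G2}. -/

import Mathlib

open SimpleGraph

/-- The graph obtained from `G` by adding the edge `e`. -/
def addEdge {V : Type*} (G : SimpleGraph V) (e : Sym2 V) : SimpleGraph V :=
  G ⊔ SimpleGraph.fromEdgeSet {e}

/-- Top vertices: the vertices receiving the same color as `v0` in every proper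
3-coloring of `G`. -/
def topSet {V : Type*} (G : SimpleGraph V) (v0 : V) : Set V :=
  {x | ∀ c : G.Coloring (Fin 3), c x = c v0}

/-- Middle vertices: the vertices outside the top having a neighbor in the top. -/
def midSet {V : Type*} (G : SimpleGraph V) (v0 : V) : Set V :=
  {x | x ∉ topSet G v0 ∧ ∃ t ∈ topSet G v0, G.Adj x t}

/-- Bottom vertices: all remaining vertices. -/
def bottomVtxSet {V : Type*} (G : SimpleGraph V) (v0 : V) : Set V :=
  {x | x ∉ topSet G v0 ∧ x ∉ midSet G v0}

/-- The vertex set of `Γ_G(u)`, the connected component of `u` in the subgraph of `G`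
induced on `{u} ∪ M_G`: all vertices reachable from `u` by a walk staying inside
`{u} ∪ M_G`. -/
def gammaSet {V : Type*} (G : SimpleGraph V) (v0 u : V) : Set V :=
  {w | ∃ p : G.Walk u w, ∀ z ∈ p.support, z ∈ insert u (midSet G v0)}

/-- `m` and `m'` lie in the same middle-component of `G` (a connected component of the
subgraph induced on `M_G`): they are joined by a walk staying inside `M_G`. -/
def midReach {V : Type*} (G : SimpleGraph V) (v0 : V) (m m' : V) : Prop :=
  ∃ p : G.Walk m m', ∀ z ∈ p.support, z ∈ midSet G v0

/-- Property (P1): the bottom `B_G` is an independent set in `G`. -/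
def prop1 {V : Type*} (G : SimpleGraph V) (v0 : V) : Prop :=
  ∀ u ∈ bottomVtxSet G v0, ∀ v ∈ bottomVtxSet G v0, ¬ G.Adj u v

/-- Property (P2): every middle-component of `G` has at most one attached bottom
vertex. -/
def prop2 {V : Type*} (G : SimpleGraph V) (v0 : V) : Prop :=
  ∀ u v m m' : V, u ∈ bottomVtxSet G v0 → v ∈ bottomVtxSet G v0 →
    m ∈ midSet G v0 → m' ∈ midSet G v0 →
    G.Adj u m → G.Adj v m' → midReach G v0 m m' → u = v

/-- `G` is good: it satisfies properties (P1) and (P2). -/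
def goodGraph {V : Type*} (G : SimpleGraph V) (v0 : V) : Prop :=
  prop1 G v0 ∧ prop2 G v0

/-- The bad pairs `BAD_G`: the pairs `uv` such that there exist distinct bottom vertices
`x ≠ y` with `u ∈ V(Γ_G(x))` and `v ∈ V(Γ_G(y))`. -/
def badPair {V : Type*} (G : SimpleGraph V) (v0 : V) (e : Sym2 V) : Prop :=
  ∃ u v x y : V, e = s(u, v) ∧ x ∈ bottomVtxSet G v0 ∧ y ∈ bottomVtxSet G v0 ∧ x ≠ y ∧
    u ∈ gammaSet G v0 x ∧ v ∈ gammaSet G v0 y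

/-- `G` is almost good: `G` is good, or some edge can be removed from `G` so that the
resulting graph is good. -/
def almostGood {V : Type*} (G : SimpleGraph V) (v0 : V) : Prop :=
  goodGraph G v0 ∨ ∃ e ∈ G.edgeSet, goodGraph (G.deleteEdges {e}) v0

/-! Suppose `x` were forced to `v0`'s color once the edges `e = ab` and `v0 y` are added.
Then, in `G`, every coloring with `a`, `b` differently colored and `y` off `v0`'s color puts
`x` on it, and vice versa. Middle vertices only use the two colors other than `v0`'s, so each
middle-component is 2-colored, and by (P1) and (P2) the component attached to a bottom vertex
`u` can be recolored together with `u` without touching anything else. Recoloring `x`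
this way keeps the colors of `y` and `v0`, so it must make `a` and `b` equally colored; this
is only possible if `a ∈ Γ(x)`. Symmetrically `a ∈ Γ(y)`, and (P2) then forces `x = y`, which
is absurd since `y` can avoid `v0`'s color in a coloring of `G ∪ {e}`. -/

lemma fin_three_eq_iff_ne : ∀ z α β γ : Fin 3, α ≠ z → β ≠ z → γ ≠ z → α ≠ β →
    (α = γ ↔ ¬ β = γ) := by
  decide

lemma fin_three_eq_of_ne : ∀ z α β γ : Fin 3, α ≠ z → β ≠ z → α ≠ β → γ ≠ α → γ ≠ β →
    γ = z := by
  decide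

lemma fin_three_exists_third : ∀ z t : Fin 3, t ≠ z →
    ∃ s, s ≠ z ∧ s ≠ t ∧ ∀ k, k ≠ z → k = t ∨ k = s := by
  decide

lemma fin_three_exists_ne_ne : ∀ z w : Fin 3, ∃ t, t ≠ z ∧ t ≠ w := by
  decide

lemma fin_three_exists_two_ne : ∀ z : Fin 3, ∃ p q : Fin 3, p ≠ z ∧ q ≠ z ∧ p ≠ q := by
  decide

def SimpleGraph.Coloring.extendAddEdge {V α : Type*} {G : SimpleGraph V}
    (c : G.Coloring α) {a b : V} (h : c a ≠ c b) : (addEdge G s(a, b)).Coloring α :=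
  Coloring.mk c fun {u w} huw => by
    rcases huw with hG | ⟨hs, -⟩
    · exact c.valid hG
    · rcases Sym2.eq_iff.mp (Set.mem_singleton_iff.mp hs) with ⟨rfl, rfl⟩ | ⟨rfl, rfl⟩
      · exact h
      · exact h.symm

section Partition

variable {V : Type*} {G H : SimpleGraph V} {v0 : V}

lemma mem_topSet_self : v0 ∈ topSet G v0 := fun _ => rfl

lemma topSet_mono (hle : G ≤ H) {w : V} (hw : w ∈ topSet G v0) : w ∈ topSet H v0 :=
  fun c => hw (c.comp (Hom.ofLE hle))

lemma bottomVtxSet_anti (hle : G ≤ H) {w : V} (hw : w ∈ bottomVtxSet H v0) :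
    w ∈ bottomVtxSet G v0 :=
  ⟨fun hT => hw.1 (topSet_mono hle hT),
    fun ⟨_, t, ht, hadj⟩ => hw.2 ⟨hw.1, t, topSet_mono hle ht, hle hadj⟩⟩

lemma SimpleGraph.Coloring.ne_of_mem_midSet (c : G.Coloring (Fin 3)) {m : V}
    (hm : m ∈ midSet G v0) : c m ≠ c v0 := by
  obtain ⟨-, t, ht, hadj⟩ := hm
  exact ht c ▸ c.valid hadj

lemma mem_midSet_of_adj (hP1 : prop1 G v0) {u w : V} (hu : u ∈ bottomVtxSet G v0)
    (h : G.Adj u w) : w ∈ midSet G v0 := by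
  by_contra hw
  have hwT : w ∉ topSet G v0 := fun hwT => hu.2 ⟨hu.1, w, hwT, h⟩
  exact hP1 u hu w ⟨hwT, hw⟩ h

end Partition

namespace midReach

variable {V : Type*} {G : SimpleGraph V} {v0 m m' m'' : V}

lemma left_mem (h : midReach G v0 m m') : m ∈ midSet G v0 :=
  h.elim fun p hp => hp m p.start_mem_support

lemma right_mem (h : midReach G v0 m m') : m' ∈ midSet G v0 :=
  h.elim fun p hp => hp m' p.end_mem_support

lemma refl (hm : m ∈ midSet G v0) : midReach G v0 m m :=
  ⟨Walk.nil, fun _ hz => List.mem_singleton.mp hz ▸ hm⟩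

lemma symm (h : midReach G v0 m m') : midReach G v0 m' m := by
  obtain ⟨p, hp⟩ := h
  exact ⟨p.reverse, fun z hz => hp z (by simpa using hz)⟩

lemma trans (h : midReach G v0 m m') (h' : midReach G v0 m' m'') : midReach G v0 m m'' := by
  obtain ⟨p, hp⟩ := h
  obtain ⟨q, hq⟩ := h'
  refine ⟨p.append q, fun z hz => ?_⟩
  rcases List.mem_append.mp (Walk.support_append p q ▸ hz) with hz | hz
  · exact hp z hz
  · exact hq z (List.mem_of_mem_tail hz)

lemma of_adj (hm : m ∈ midSet G v0) (hm' : m' ∈ midSet G v0) (h : G.Adj m m') :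
    midReach G v0 m m' := by
  refine ⟨Walk.cons h Walk.nil, fun z hz => ?_⟩
  simp only [Walk.support_cons, Walk.support_nil, List.mem_cons, List.not_mem_nil,
    or_false] at hz
  rcases hz with rfl | rfl
  exacts [hm, hm']

end midReach

section MiddleColors

variable {V : Type*} {G : SimpleGraph V} {v0 : V}

/-- Middle vertices avoid `v0`'s color, so along a middle walk the two remaining colors
alternate. -/
lemma SimpleGraph.Coloring.eq_iff_even_length (c : G.Coloring (Fin 3)) {m m' : V}
    (p : G.Walk m m') (hp : ∀ z ∈ p.support, z ∈ midSet G v0) :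
    c m = c m' ↔ Even p.length := by
  induction p with
  | nil => simp
  | @cons w w₁ w₂ h q ih =>
    have hmid : ∀ z ∈ q.support, z ∈ midSet G v0 := fun z hz =>
      hp z (List.mem_cons_of_mem _ hz)
    rw [Walk.length_cons, Nat.even_add_one, ← ih hmid]
    exact fin_three_eq_iff_ne _ _ _ _ (c.ne_of_mem_midSet (hp w (List.mem_cons_self ..)))
      (c.ne_of_mem_midSet (hmid w₁ q.start_mem_support))
      (c.ne_of_mem_midSet (hmid w₂ q.end_mem_support)) (c.valid h)

/-- Otherwise the two neighbors get different colors in every coloring, by parity, and `u`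
would be forced to `v0`'s color. -/
lemma SimpleGraph.Coloring.eq_of_adj_of_midReach {u m m' : V} (hu : u ∈ bottomVtxSet G v0)
    (c : G.Coloring (Fin 3)) (hm : G.Adj u m) (hm' : G.Adj u m')
    (hr : midReach G v0 m m') : c m = c m' := by
  by_contra hne
  obtain ⟨p, hp⟩ := hr
  refine hu.1 fun d => ?_
  have hd : d m ≠ d m' := fun h =>
    hne ((c.eq_iff_even_length p hp).mpr ((d.eq_iff_even_length p hp).mp h))
  exact fin_three_eq_of_ne _ _ _ _ (d.ne_of_mem_midSet (hp m p.start_mem_support))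
    (d.ne_of_mem_midSet (hp m' p.end_mem_support)) hd (d.valid hm) (d.valid hm')

end MiddleColors

def attachedRegion {V : Type*} (G : SimpleGraph V) (v0 : V) (c : G.Coloring (Fin 3))
    (u : V) (t : Fin 3) : Set V :=
  {w | ∃ m, G.Adj u m ∧ c m = t ∧ midReach G v0 m w}

section Recoloring

variable {V : Type*} {G : SimpleGraph V} {v0 u : V}

lemma attachedRegion_subset_midSet (c : G.Coloring (Fin 3)) (t : Fin 3) :
    attachedRegion G v0 c u t ⊆ midSet G v0 :=
  fun _ ⟨_, _, _, hr⟩ => hr.right_mem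

lemma color_eq_of_mem_attachedRegion (hu : u ∈ bottomVtxSet G v0) (c : G.Coloring (Fin 3))
    {t : Fin 3} {w : V} (hw : w ∈ attachedRegion G v0 c u t) (huw : G.Adj u w) : c w = t := by
  obtain ⟨m, hum, rfl, hr⟩ := hw
  exact c.eq_of_adj_of_midReach hu huw hum hr.symm

lemma disjoint_attachedRegion (hu : u ∈ bottomVtxSet G v0) (c : G.Coloring (Fin 3))
    {t t' : Fin 3} (htt' : t ≠ t') :
    Disjoint (attachedRegion G v0 c u t) (attachedRegion G v0 c u t') := by
  refine Set.disjoint_left.mpr fun w ⟨m, hum, hm, hr⟩ ⟨m', hum', hm', hr'⟩ => htt' ?_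
  rw [← hm, ← hm']
  exact c.eq_of_adj_of_midReach hu hum hum' (hr.trans hr'.symm)

/-- By (P2), `u` is the only bottom vertex next to the region. -/
lemma mem_topSet_of_adj_of_mem_attachedRegion (hgood : goodGraph G v0)
    (hu : u ∈ bottomVtxSet G v0) (c : G.Coloring (Fin 3)) {t : Fin 3} {w w' : V}
    (hw : w ∈ attachedRegion G v0 c u t) (h : G.Adj w w') (hw'u : w' ≠ u)
    (hw' : w' ∉ attachedRegion G v0 c u t) : w' ∈ topSet G v0 := by
  obtain ⟨m, hum, hcm, hr⟩ := hw
  by_contra hw'T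
  by_cases hw'M : w' ∈ midSet G v0
  · exact hw' ⟨m, hum, hcm, hr.trans (.of_adj hr.right_mem hw'M h)⟩
  · exact hw'u (hgood.2 w' u w m ⟨hw'T, hw'M⟩ hu hr.right_mem hr.left_mem h.symm hum hr.symm)

/-- Give `u` the color `t` and swap the two colors other than `v0`'s on the middle-components
attached to `u` through a neighbor of color `t`. -/
lemma exists_recoloring (hgood : goodGraph G v0) (hu : u ∈ bottomVtxSet G v0)
    (c : G.Coloring (Fin 3)) {t : Fin 3} (ht : t ≠ c v0) :
    ∃ c' : G.Coloring (Fin 3), c' u = t ∧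
      ∀ w, w ≠ u → w ∉ attachedRegion G v0 c u t → c' w = c w := by
  classical
  obtain ⟨s, hsz, hst, hcolors⟩ := fin_three_exists_third _ _ ht
  set R := attachedRegion G v0 c u t
  have hRu : ∀ w ∈ R, w ≠ u := fun w hw hwu =>
    hu.2 (hwu ▸ attachedRegion_subset_midSet c t hw)
  have hswap : ∀ w ∈ R, Equiv.swap t s (c w) ≠ c w ∧ Equiv.swap t s (c w) ≠ c v0 := by
    intro w hw
    rcases hcolors (c w) (c.ne_of_mem_midSet (attachedRegion_subset_midSet c t hw)) with h | h
    · rw [h, Equiv.swap_apply_left]; exact ⟨hst, hsz⟩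
    · rw [h, Equiv.swap_apply_right]; exact ⟨hst.symm, ht⟩
  let f : V → Fin 3 := fun w => if w = u then t else if w ∈ R then Equiv.swap t s (c w) else c w
  have f_of_mem : ∀ w ∈ R, f w = Equiv.swap t s (c w) := fun w hw => by
    simp only [f, if_neg (hRu w hw), if_pos hw]
  have f_u : f u = t := if_pos rfl
  have f_of_not_mem : ∀ w, w ≠ u → w ∉ R → f w = c w := fun w hwu hw => by
    simp only [f, if_neg hwu, if_neg hw]
  have f_adj_u : ∀ w, G.Adj u w → f w ≠ t := by
    intro w huw
    by_cases hw : w ∈ R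
    · rw [f_of_mem w hw]
      exact fun h => (hswap w hw).1 (h.trans (color_eq_of_mem_attachedRegion hu c hw huw).symm)
    · rw [f_of_not_mem w huw.ne' hw]
      exact fun hcw => hw ⟨w, huw, hcw, .refl (mem_midSet_of_adj hgood.1 hu huw)⟩
  have f_leave : ∀ w w', G.Adj w w' → w ∈ R → w' ≠ u → w' ∉ R → f w ≠ f w' := by
    intro w w' h hw hw'u hw'
    rw [f_of_mem w hw, f_of_not_mem w' hw'u hw',
      mem_topSet_of_adj_of_mem_attachedRegion hgood hu c hw h hw'u hw' c]
    exact (hswap w hw).2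
  have f_valid : ∀ {w w'}, G.Adj w w' → f w ≠ f w' := by
    intro w w' h
    by_cases hwu : w = u
    · rw [hwu, f_u]; exact (f_adj_u w' (hwu ▸ h)).symm
    by_cases hw'u : w' = u
    · rw [hw'u, f_u]; exact f_adj_u w (hw'u ▸ h.symm)
    by_cases hw : w ∈ R <;> by_cases hw' : w' ∈ R
    · rw [f_of_mem w hw, f_of_mem w' hw']
      exact fun heq => c.valid h ((Equiv.swap t s).injective heq)
    · exact f_leave w w' h hw hw'u hw'
    · exact (f_leave w' w h.symm hw' hwu hw).symm
    · rw [f_of_not_mem w hwu hw, f_of_not_mem w' hw'u hw']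
      exact c.valid h
  exact ⟨Coloring.mk f f_valid, f_u, f_of_not_mem⟩

end Recoloring

section Gamma

variable {V : Type*} {G : SimpleGraph V} {v0 : V}

/-- The conclusion says `a ∈ Γ(u)`. Otherwise `exists_recoloring` moves `u` off `v0`'s color
while fixing `a`, `v` and `v0`, and a suitable target color keeps `a` and `b` apart. -/
lemma eq_or_adj_midReach_of_forces (hgood : goodGraph G v0) {u v a b : V}
    (hu : u ∈ bottomVtxSet G v0) (hv : v ∈ bottomVtxSet G v0) (huv : u ≠ v)
    (c : G.Coloring (Fin 3)) (hcab : c a ≠ c b) (hcv : c v ≠ c v0)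
    (hforces : ∀ d : G.Coloring (Fin 3), d a ≠ d b → d u ≠ d v0 → d v = d v0) :
    a = u ∨ ∃ m, G.Adj u m ∧ midReach G v0 m a := by
  by_contra! ha
  have ha_notMem : ∀ t, a ∉ attachedRegion G v0 c u t := fun t ⟨m, hum, _, hr⟩ =>
    ha.2 m hum hr
  have hrecolor : ∀ t ≠ c v0, ∃ c' : G.Coloring (Fin 3), c' u = t ∧ c' a = c a ∧ c' a = c' b ∧
      ∀ w, w ≠ u → w ∉ attachedRegion G v0 c u t → c' w = c w := by
    intro t ht
    obtain ⟨c', hc'u, hc'⟩ := exists_recoloring hgood hu c ht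
    have hv0 : c' v0 = c v0 := hc' v0 (fun h => hu.1 (h ▸ mem_topSet_self))
      fun h => (attachedRegion_subset_midSet c t h).1 mem_topSet_self
    have hv : c' v = c v := hc' v huv.symm fun h => hv.2 (attachedRegion_subset_midSet c t h)
    refine ⟨c', hc'u, hc' a ha.1 (ha_notMem t), ?_, hc'⟩
    by_contra hne
    exact hcv (hv ▸ hv0 ▸ hforces c' hne (by rwa [hc'u, hv0]))
  by_cases hbu : b = u
  · obtain ⟨t, ht, hta⟩ := fin_three_exists_ne_ne (c v0) (c a)
    obtain ⟨c', hc'u, hc'a, hc'ab, -⟩ := hrecolor t ht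
    exact hta (by rw [← hc'u, ← hbu, ← hc'ab, hc'a])
  · obtain ⟨p, q, hp, hq, hpq⟩ := fin_three_exists_two_ne (c v0)
    obtain ⟨t, ht, hbt⟩ : ∃ t ≠ c v0, b ∉ attachedRegion G v0 c u t := by
      by_cases hbp : b ∈ attachedRegion G v0 c u p
      · exact ⟨q, hq, Set.disjoint_left.mp (disjoint_attachedRegion hu c hpq) hbp⟩
      · exact ⟨p, hp, hbp⟩
    obtain ⟨c', -, hc'a, hc'ab, hc'⟩ := hrecolor t ht
    exact hcab (by rw [← hc'a, hc'ab, hc' b hbu hbt])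

lemma eq_of_adj_midReach (hgood : goodGraph G v0) {x y a : V}
    (hx : x ∈ bottomVtxSet G v0) (hy : y ∈ bottomVtxSet G v0)
    (hax : a = x ∨ ∃ m, G.Adj x m ∧ midReach G v0 m a)
    (hay : a = y ∨ ∃ m, G.Adj y m ∧ midReach G v0 m a) : x = y := by
  rcases hax with rfl | ⟨m, hxm, hm⟩ <;> rcases hay with h | ⟨m', hym, hm'⟩
  · exact h
  · exact absurd hm'.right_mem hx.2
  · exact absurd (h ▸ hm.right_mem) hy.2
  · exact hgood.2 x y m m' hx hy hm.left_mem hm'.left_mem hxm hym (hm.trans hm'.symm)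

end Gamma

theorem statement_17_general {V : Type*} (G : SimpleGraph V) (v0 : V)
    (hgood : goodGraph G v0)
    (e : Sym2 V) (hd : ¬ e.IsDiag)
    (x y : V) (hx : x ∈ bottomVtxSet (addEdge G e) v0) (hy : y ∈ bottomVtxSet (addEdge G e) v0) :
    x ∉ topSet (addEdge (addEdge G e) s(v0, y)) v0 := by
  induction e using Sym2.ind with
  | _ a b =>
  intro hT
  have hle : G ≤ addEdge G s(a, b) := le_sup_left
  have hab : (addEdge G s(a, b)).Adj a b :=
    Or.inr ((fromEdgeSet_adj _).mpr ⟨rfl, Sym2.mk_isDiag_iff.not.mp hd⟩)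
  have hforces : ∀ d : G.Coloring (Fin 3), d a ≠ d b → d y ≠ d v0 → d x = d v0 :=
    fun d hdab hdy => hT ((d.extendAddEdge hdab).extendAddEdge (Ne.symm hdy))
  obtain ⟨κy, hκy⟩ := not_forall.mp hy.1
  obtain ⟨κx, hκx⟩ := not_forall.mp hx.1
  have hxy : x ≠ y := fun h =>
    hκy (h ▸ hforces (κy.comp (Hom.ofLE hle)) (κy.valid hab) (h ▸ hκy))
  have hxB := bottomVtxSet_anti hle hx
  have hyB := bottomVtxSet_anti hle hy
  refine hxy (eq_of_adj_midReach (a := a) hgood hxB hyB ?_ ?_)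
  · exact eq_or_adj_midReach_of_forces hgood hxB hyB hxy (κy.comp (Hom.ofLE hle))
      (κy.valid hab) hκy fun d hdab hdx => by_contra fun hdy => hdx (hforces d hdab hdy)
  · exact eq_or_adj_midReach_of_forces hgood hyB hxB hxy.symm (κx.comp (Hom.ofLE hle))
      (κx.valid hab) hκx hforces

/-- If `G` is a good 3-colorable graph, `G1 = G ∪ {e}` for a non-edge `e` of `G`,
`x, y ∈ B_{G1}`, `G2 = G1 ∪ {v0 y}`, `G1` and `G2` are 3-colorable, and `G2` satisfies
property (P1) (its bottom is independent), then `x ∉ T_{G2}`. -/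
theorem statement_17 {V : Type*} (G : SimpleGraph V) (v0 : V)
    (hcol : G.Colorable 3) (hgood : goodGraph G v0)
    (e : Sym2 V) (hd : ¬ e.IsDiag) (hne : e ∉ G.edgeSet)
    (hcol1 : (addEdge G e).Colorable 3)
    (x y : V) (hx : x ∈ bottomVtxSet (addEdge G e) v0) (hy : y ∈ bottomVtxSet (addEdge G e) v0)
    (hcol2 : (addEdge (addEdge G e) s(v0, y)).Colorable 3)
    (hP1 : prop1 (addEdge (addEdge G e) s(v0, y)) v0) :
    x ∉ topSet (addEdge (addEdge G e) s(v0, y)) v0 :=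
  statement_17_general G v0 hgood e hd x y hx hy
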